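/- Let F be a field of characteristic 0. The polynomial Y(λ₁,λ₂,λ₃) = (λ₁-λ₂)(λ₁-λ₃)(λ₂-λ₃) ∈ F[λ₁,λ₂,λ₃] is alternating under permutations of λ₁,λ₂,λ₃, its image in F[λ₁,λ₂,λ₃]/⟨λ₁+λ₂+λ₃⟩ is nonzero, and Y defines a 3-cocycle of the centerless Virasoro Lie conformal algebra (with [L_λ L] = (∂+2λ)L) with trivial coefficients. -/

import Mathlib

open MvPolynomial

/-- The Vandermonde 3-cochain value `Y(μ₁,μ₂,μ₃) = (μ₁-μ₂)(μ₁-μ₃)(μ₂-μ₃)`. -/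
noncomputable def vanderY {F : Type*} [Field F] (a b c : MvPolynomial (Fin 3) F) :
    MvPolynomial (Fin 3) F :=
  (a - b) * (a - c) * (b - c)

/-- The polynomial `Y(λ₁,λ₂,λ₃) = (λ₁-λ₂)(λ₁-λ₃)(λ₂-λ₃)` is alternating
under permutations of the variables; its image modulo `⟨λ₁+λ₂+λ₃⟩` is nonzero; and it
satisfies the 3-cocycle condition for the centerless Virasoro Lie conformal algebra
`[L_λ L] = (∂+2λ)L` with trivial coefficients:
`Σ_{0≤i<j≤3} (-1)^{i+j} (λᵢ-λⱼ) Y(λᵢ+λⱼ, λₖ, λₗ) = 0 mod ⟨λ₀+λ₁+λ₂+λ₃⟩`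
(here verified after substituting `λ₃ := -λ₀-λ₁-λ₂`). -/
theorem virasoro_three_cocycle {F : Type*} [Field F] [CharZero F] :
    ∀ Yp : MvPolynomial (Fin 3) F,
      Yp = (X 0 - X 1) * (X 0 - X 2) * (X 1 - X 2) →
    -- alternating under S₃
    (∀ σ : Equiv.Perm (Fin 3),
      MvPolynomial.rename (⇑σ) Yp = ((Equiv.Perm.sign σ : ℤ)) • Yp)
    -- nonzero modulo `⟨λ₁+λ₂+λ₃⟩`
    ∧ (MvPolynomial.aeval
        (fun i : Fin 3 => if i = 0 then (X 0 : MvPolynomial (Fin 2) F)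
          else if i = 1 then X 1 else -X 0 - X 1) Yp ≠ 0)
    -- the 3-cocycle condition (with `λ₃ := -λ₀-λ₁-λ₂`, `l i` the four variables)
    ∧ (∀ l : Fin 4 → MvPolynomial (Fin 3) F,
        l 0 = X 0 → l 1 = X 1 → l 2 = X 2 → l 3 = -X 0 - X 1 - X 2 →
        -(l 0 - l 1) * vanderY (l 0 + l 1) (l 2) (l 3)
        + (l 0 - l 2) * vanderY (l 0 + l 2) (l 1) (l 3)
        - (l 0 - l 3) * vanderY (l 0 + l 3) (l 1) (l 2)
        - (l 1 - l 2) * vanderY (l 1 + l 2) (l 0) (l 3)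
        + (l 1 - l 3) * vanderY (l 1 + l 3) (l 0) (l 2)
        - (l 2 - l 3) * vanderY (l 2 + l 3) (l 0) (l 1)
        = 0) := by
  intro Yp hYp
  subst hYp
  refine ⟨?_, ?_, ?_⟩
  · intro σ
    rcases (by decide : ∀ τ : Equiv.Perm (Fin 3), τ = 1 ∨ τ = Equiv.swap 0 1 ∨ τ = Equiv.swap 0 2 ∨
        τ = Equiv.swap 1 2 ∨ τ = Equiv.swap 0 1 * Equiv.swap 0 2 ∨
        τ = Equiv.swap 0 2 * Equiv.swap 0 1) σ with rfl | rfl | rfl | rfl | rfl | rfl <;>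
      · simp only [map_mul, map_sub, rename_X]
        norm_num [Equiv.swap_apply_def, Fin.ext_iff, zsmul_eq_mul, Equiv.Perm.sign_mul, Equiv.Perm.sign_swap]
        try simp only [show (⟨2, by omega⟩ : Fin 3) = 2 from rfl]
        try ring
  · intro h
    have h2 : (MvPolynomial.eval (fun i : Fin 2 => if i = 0 then (1 : F) else 0))
        (MvPolynomial.aeval (R := F)
          (fun i : Fin 3 => if i = 0 then (X 0 : MvPolynomial (Fin 2) F)
            else if i = 1 then X 1 else -X 0 - X 1)
          ((X 0 - X 1) * (X 0 - X 2) * (X 1 - X 2))) = 2 := by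
      simp
      norm_num
    rw [h] at h2
    simp at h2
  · intro l h0 h1 h2 h3
    rw [h0, h1, h2, h3]
    simp only [vanderY]
    ring
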